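/- Let Y, Q be random vectors in ℝ^d and Π a random d×d matrix such that (i) Q is independent of the pair (Y, Π); (ii) for some α > 0 and regularly varying a of index 1/α, Y and Q are regularly varying with index α and normalizing function a; (iii) E‖Π‖^β < ∞ for some β > α. Then for every t > 0 and ε > 0: lim_{n→∞} n P( ‖Y‖ > (1+ε) t a_n and ‖Y + ΠQ‖ ≤ t a_n ) = 0. -/

import Mathlib

open MeasureTheory ProbabilityTheory Filter Topology ENNReal

noncomputable section

/-- `ℝ^d` with the sup norm (the Pi norm on `Fin d → ℝ` is the sup norm). -/
abbrev Vec (d : ℕ) := Fin d → ℝ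

/-- `d × d` real matrices. -/
abbrev Mat (d : ℕ) := Matrix (Fin d) (Fin d) ℝ

/-- The operator norm of a `d × d` matrix, induced by the sup norm on `ℝ^d`. -/
noncomputable def opNorm {d : ℕ} (M : Mat d) : ℝ :=
  ‖LinearMap.toContinuousLinearMap M.mulVecLin‖

/-- `a` is regularly varying of index `ρ`: `a t = t ^ ρ * L t` with `L` slowly varying. -/
def RegVaryFun (a : ℝ → ℝ) (ρ : ℝ) : Prop :=
  ∃ L : ℝ → ℝ, Measurable L ∧ (∀ t > 0, 0 < L t) ∧
    (∀ lam > 0, Filter.Tendsto (fun t => L (lam * t) / L t) Filter.atTop (nhds 1)) ∧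
    (∀ t > 0, a t = t ^ ρ * L t)

/-- A random vector `X` is regularly varying with index `α > 0`, normalizing function `a`
and associated measure of regular variation `ν`: `ν` is finite on Borel sets bounded away
from `0` and `n P(a_n⁻¹ X ∈ A) → ν A` for every Borel `ν`-continuity set `A` bounded away
from `0`. -/
def IsRegVar {Ω : Type*} [MeasurableSpace Ω] (P : Measure Ω) {d : ℕ}
    (X : Ω → Vec d) (α : ℝ) (a : ℝ → ℝ) (ν : Measure (Vec d)) : Prop :=
  0 < α ∧ RegVaryFun a (1 / α) ∧
  (∀ A : Set (Vec d), MeasurableSet A → 0 ∉ closure A → ν A < ⊤) ∧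
  ∀ A : Set (Vec d), MeasurableSet A → 0 ∉ closure A → ν (frontier A) = 0 →
    Filter.Tendsto (fun n : ℕ => (n : ℝ) * (P {ω | (a n)⁻¹ • X ω ∈ A}).toReal)
      Filter.atTop (nhds (ν A).toReal)

instance {d : ℕ} : MeasurableSpace (Mat d) :=
  (inferInstance : MeasurableSpace (Fin d → Fin d → ℝ))

/-!
On the event, the triangle inequality gives `‖Y‖ ≥ (1+ε) t aₙ` and `‖Π‖ ‖Q‖ ≥ ε t aₙ`.
Conditioning on `(Y, Π)`, which is independent of `Q`, the probability is at most
`E[1{‖Y‖ ≥ (1+ε) t aₙ} · P(‖Q‖ ≥ ε t aₙ / ‖Π‖)]`. Potter's bounds for the regularly varying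
normalisation `a` turn the single tail estimate `n P(‖Q‖ ≥ r aₙ) = O(1)` into the uniform
bound `n P(‖Q‖ ≥ s aₙ) ≤ C (1 + s^(-β))` for all `s > 0`. Hence `n` times the probability is at
most the integral of the integrable function `C (1 + (‖Π‖ / ε t)^β)` over
`{‖Y‖ ≥ (1+ε) t aₙ}`, an event whose probability tends to `0` because `aₙ → ∞`.
-/

def SlowlyVarying (L : ℝ → ℝ) : Prop :=
  Measurable L ∧ (∀ t > 0, 0 < L t) ∧ ∀ lam > 0, Tendsto (fun t => L (lam * t) / L t) atTop (𝓝 1)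

theorem exists_volume_le_eventually_abs_sub_lt {h : ℝ → ℝ} (hm : Measurable h)
    (hh : ∀ v, Tendsto (fun x => h (x + v) - h x) atTop (𝓝 0)) {y : ℕ → ℝ}
    (hy : Tendsto y atTop atTop) {ε : ℝ} (hε : 0 < ε) :
    ∃ T ⊆ Set.Icc (0 : ℝ) 2, volume T ≤ ENNReal.ofReal (1 / 4) ∧
      ∀ᶠ k in atTop, ∀ u ∈ Set.Icc (0 : ℝ) 2 \ T, |h (y k + u) - h (y k)| < ε := by
  obtain ⟨T, hTs, -, hT, hunif⟩ := tendstoUniformlyOn_of_ae_tendsto (μ := volume)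
    (f := fun k u => h (y k + u) - h (y k)) (g := 0)
    (fun k => ((hm.comp (measurable_const_add _)).sub_const _).stronglyMeasurable)
    stronglyMeasurable_const measurableSet_Icc (by simp)
    (ae_of_all _ fun u _ => (hh u).comp hy) (by norm_num : (0 : ℝ) < 1 / 4)
  refine ⟨T, hTs, hT, ?_⟩
  filter_upwards [Metric.tendstoUniformlyOn_iff.mp hunif ε hε] with k hk u hu
  simpa [Real.dist_eq, abs_sub_comm] using hk u hu

/-- The uniform convergence theorem for slowly varying functions, in additive form. -/
theorem eventually_abs_sub_le_of_tendsto_sub {h : ℝ → ℝ} (hm : Measurable h)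
    (hh : ∀ v, Tendsto (fun x => h (x + v) - h x) atTop (𝓝 0)) {ε : ℝ} (hε : 0 < ε) :
    ∀ᶠ x in atTop, ∀ v ∈ Set.Icc (0 : ℝ) 1, |h (x + v) - h x| ≤ ε := by
  by_contra hcon
  obtain ⟨x, hx, hbad⟩ : ∃ x : ℕ → ℝ, (∀ k : ℕ, (k : ℝ) ≤ x k) ∧
      ∀ k, ∃ v ∈ Set.Icc (0 : ℝ) 1, ε < |h (x k + v) - h (x k)| := by
    simp only [not_eventually, frequently_atTop, not_forall, not_le, exists_prop] at hcon
    choose x hx hbad using fun k : ℕ => hcon k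
    exact ⟨x, hx, hbad⟩
  choose v hv hbad using hbad
  have hxt : Tendsto x atTop atTop := tendsto_atTop_mono hx tendsto_natCast_atTop_atTop
  have hyt : Tendsto (fun k => x k + v k) atTop atTop :=
    tendsto_atTop_mono (fun k => le_add_of_nonneg_right (hv k).1) hxt
  obtain ⟨T₁, -, hT₁, hk₁⟩ := exists_volume_le_eventually_abs_sub_lt hm hh hxt (half_pos hε)
  obtain ⟨T₂, -, hT₂, hk₂⟩ := exists_volume_le_eventually_abs_sub_lt hm hh hyt (half_pos hε)
  obtain ⟨k, hk₁, hk₂⟩ := (hk₁.and hk₂).exists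
  -- A shift `u ∈ [1, 2]` that is good both from `x k` and from `x k + v k` lands both at
  -- `x k + u`, and the triangle inequality through `h (x k + u)` contradicts `hbad k`.
  obtain ⟨u, hu, huT⟩ : ∃ u ∈ Set.Icc (1 : ℝ) 2, u ∉ T₁ ∪ (fun w => w + -v k) ⁻¹' T₂ := by
    by_contra! hsub
    have hvol : volume (Set.Icc (1 : ℝ) 2) ≤ ENNReal.ofReal (1 / 4) + ENNReal.ofReal (1 / 4) :=
      calc volume (Set.Icc (1 : ℝ) 2) ≤ volume (T₁ ∪ (fun w => w + -v k) ⁻¹' T₂) :=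
            measure_mono hsub
        _ ≤ volume T₁ + volume T₂ := by
            grw [measure_union_le, measure_preimage_add_right]
        _ ≤ _ := add_le_add hT₁ hT₂
    rw [Real.volume_Icc, ← ENNReal.ofReal_add (by norm_num) (by norm_num),
      ENNReal.ofReal_le_ofReal_iff (by norm_num)] at hvol
    norm_num at hvol
  have h₁ := hk₁ u ⟨⟨by linarith [hu.1], hu.2⟩, fun h => huT (Or.inl h)⟩
  have h₂ := hk₂ (u - v k) ⟨⟨by linarith [hu.1, (hv k).2], by linarith [hu.2, (hv k).1]⟩,
    fun h => huT (Or.inr (by simpa [sub_eq_add_neg] using h))⟩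
  rw [show x k + v k + (u - v k) = x k + u by ring, abs_sub_comm] at h₂
  have htri := abs_sub_le (h (x k + v k)) (h (x k + u)) (h (x k))
  linarith [hbad k]

theorem abs_sub_le_mul_add_one {h : ℝ → ℝ} {X η : ℝ}
    (hX : ∀ x ≥ X, ∀ v ∈ Set.Icc (0 : ℝ) 1, |h (x + v) - h x| ≤ η)
    {x w : ℝ} (hx : X ≤ x) (hw : 0 ≤ w) : |h (x + w) - h x| ≤ η * (w + 1) := by
  have hη : 0 ≤ η := by simpa using hX X le_rfl 0 (by simp)
  have integer_steps : ∀ N : ℕ, ∀ x ≥ X, ∀ v ∈ Set.Icc (0 : ℝ) 1,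
      |h (x + N + v) - h x| ≤ η * (N + 1) := by
    intro N
    induction N with
    | zero => simpa using hX
    | succ N ih =>
      intro x hx v hv
      have hstep := ih (x + 1) (by linarith) v hv
      have hone := hX x hx 1 (by simp)
      rw [show x + 1 + N + v = x + (N + 1 : ℕ) + v by push_cast; ring] at hstep
      calc |h (x + (N + 1 : ℕ) + v) - h x|
          ≤ |h (x + (N + 1 : ℕ) + v) - h (x + 1)| + |h (x + 1) - h x| := abs_sub_le _ _ _
        _ ≤ η * (N + 1) + η := add_le_add hstep hone
        _ = η * ((N + 1 : ℕ) + 1) := by push_cast; ring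
  have hfract : w - ⌊w⌋₊ ∈ Set.Icc (0 : ℝ) 1 :=
    ⟨sub_nonneg.mpr (Nat.floor_le hw), by linarith [Nat.lt_floor_add_one w]⟩
  calc |h (x + w) - h x| = |h (x + ⌊w⌋₊ + (w - ⌊w⌋₊)) - h x| := by ring_nf
    _ ≤ η * (⌊w⌋₊ + 1) := integer_steps _ x hx _ hfract
    _ ≤ η * (w + 1) := by gcongr; exact Nat.floor_le hw

namespace SlowlyVarying

variable {L : ℝ → ℝ}

theorem tendsto_log_comp_exp_sub (hL : SlowlyVarying L) (v : ℝ) :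
    Tendsto (fun u => Real.log (L (Real.exp (u + v))) - Real.log (L (Real.exp u))) atTop (𝓝 0) := by
  have hratio := (hL.2.2 (Real.exp v) (Real.exp_pos v)).comp Real.tendsto_exp_atTop
  have hlog := ((Real.continuousAt_log one_ne_zero).tendsto.comp hratio)
  rw [Real.log_one] at hlog
  refine hlog.congr fun u => ?_
  simp only [Function.comp_apply, ← Real.exp_add, add_comm v u]
  exact Real.log_div (hL.2.1 _ (Real.exp_pos _)).ne' (hL.2.1 _ (Real.exp_pos _)).ne'

/-- Potter's bound. -/
theorem exists_le_mul_rpow (hL : SlowlyVarying L) {η : ℝ} (hη : 0 < η) :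
    ∃ X > 0, ∀ x ≥ X, ∀ y ≥ x, L x ≤ Real.exp η * (y / x) ^ η * L y := by
  set h : ℝ → ℝ := fun u => Real.log (L (Real.exp u))
  have hm : Measurable h := Real.measurable_log.comp (hL.1.comp Real.measurable_exp)
  obtain ⟨X₀, hX₀⟩ := eventually_atTop.mp
    (eventually_abs_sub_le_of_tendsto_sub hm hL.tendsto_log_comp_exp_sub hη)
  refine ⟨Real.exp X₀, Real.exp_pos _, fun x hx y hxy => ?_⟩
  have hx0 : 0 < x := (Real.exp_pos _).trans_le hx
  have hy0 : 0 < y := hx0.trans_le hxy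
  have hlogx : X₀ ≤ Real.log x := by rwa [Real.le_log_iff_exp_le hx0]
  have hw : 0 ≤ Real.log (y / x) := Real.log_nonneg ((one_le_div hx0).mpr hxy)
  have hbound := abs_le.mp (abs_sub_le_mul_add_one hX₀ hlogx hw)
  have hlogy : Real.log x + Real.log (y / x) = Real.log y := by
    rw [Real.log_div hy0.ne' hx0.ne']; ring
  simp only [h, hlogy, Real.exp_log hx0, Real.exp_log hy0] at hbound
  calc L x = Real.exp (Real.log (L x)) := (Real.exp_log (hL.2.1 x hx0)).symm
    _ ≤ Real.exp (η + Real.log (y / x) * η + Real.log (L y)) :=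
        Real.exp_le_exp.mpr (by linarith [hbound.1])
    _ = Real.exp η * (y / x) ^ η * L y := by
        rw [Real.exp_add, Real.exp_add, Real.exp_log (hL.2.1 y hy0),
          Real.rpow_def_of_pos (div_pos hy0 hx0)]

end SlowlyVarying

namespace RegVaryFun

variable {a : ℝ → ℝ} {ρ : ℝ}

theorem exists_slowlyVarying (ha : RegVaryFun a ρ) :
    ∃ L, SlowlyVarying L ∧ ∀ t > 0, a t = t ^ ρ * L t := by
  obtain ⟨L, hLm, hLpos, hsv, haL⟩ := ha
  exact ⟨L, ⟨hLm, hLpos, hsv⟩, haL⟩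

theorem pos (ha : RegVaryFun a ρ) {t : ℝ} (ht : 0 < t) : 0 < a t := by
  obtain ⟨L, hL, haL⟩ := ha.exists_slowlyVarying
  rw [haL t ht]
  exact mul_pos (Real.rpow_pos_of_pos ht ρ) (hL.2.1 t ht)

theorem exists_le_mul_rpow (ha : RegVaryFun a ρ) {η : ℝ} (hη : 0 < η) :
    ∃ X > 0, ∀ x ≥ X, ∀ y ≥ x, a x ≤ Real.exp η * (x / y) ^ (ρ - η) * a y := by
  obtain ⟨L, hL, haL⟩ := ha.exists_slowlyVarying
  obtain ⟨X, hX, hpotter⟩ := hL.exists_le_mul_rpow hη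
  refine ⟨X, hX, fun x hx y hxy => ?_⟩
  have hx0 : 0 < x := hX.trans_le hx
  have hy0 : 0 < y := hx0.trans_le hxy
  have hpow : x ^ ρ * (y / x) ^ η = (x / y) ^ (ρ - η) * y ^ ρ := by
    rw [Real.div_rpow hy0.le hx0.le, Real.div_rpow hx0.le hy0.le, Real.rpow_sub hx0,
      Real.rpow_sub hy0]
    field_simp
  rw [haL x hx0, haL y hy0]
  calc x ^ ρ * L x ≤ x ^ ρ * (Real.exp η * (y / x) ^ η * L y) :=
        mul_le_mul_of_nonneg_left (hpotter x hx y hxy) (Real.rpow_nonneg hx0.le ρ)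
    _ = Real.exp η * (x ^ ρ * (y / x) ^ η) * L y := by ring
    _ = Real.exp η * (x / y) ^ (ρ - η) * (y ^ ρ * L y) := by rw [hpow]; ring

theorem tendsto_atTop (ha : RegVaryFun a ρ) (hρ : 0 < ρ) : Tendsto a atTop atTop := by
  obtain ⟨X, hX, hpotter⟩ := ha.exists_le_mul_rpow (half_pos hρ)
  rw [show ρ - ρ / 2 = ρ / 2 by ring] at hpotter
  set e := Real.exp (ρ / 2)
  have hgrowth : Tendsto (fun y => a X * e⁻¹ * (y / X) ^ (ρ / 2)) atTop atTop :=
    ((tendsto_rpow_atTop (half_pos hρ)).comp (tendsto_id.atTop_div_const hX)).const_mul_atTop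
      (by have := ha.pos hX; positivity)
  refine tendsto_atTop_mono' _ ?_ hgrowth
  filter_upwards [eventually_ge_atTop X] with y hy
  have hy0 : 0 < y := hX.trans_le hy
  have hinv : (X / y) ^ (ρ / 2) * (y / X) ^ (ρ / 2) = 1 := by
    rw [← Real.mul_rpow (by positivity) (by positivity),
      div_mul_div_cancel₀ hy0.ne', div_self hX.ne', Real.one_rpow]
  calc a X * e⁻¹ * (y / X) ^ (ρ / 2) ≤ e * (X / y) ^ (ρ / 2) * a y * e⁻¹ * (y / X) ^ (ρ / 2) := by
        gcongr; exact hpotter X le_rfl y hy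
    _ = a y * (e * e⁻¹) * ((X / y) ^ (ρ / 2) * (y / X) ^ (ρ / 2)) := by ring
    _ = a y := by rw [hinv, mul_inv_cancel₀ (Real.exp_pos _).ne', mul_one, mul_one]

end RegVaryFun

theorem nat_mul_le_of_le_mul_rpow {F a : ℝ → ℝ} {r K X γ C₀ : ℝ} (hF : Antitone F)
    (hF1 : ∀ x, F x ≤ 1) (hr : 0 < r) (hK : 0 < K) (hX : 0 < X) (hγ : 0 < γ)
    (ha : ∀ t ≥ X, 0 ≤ a t) (hpotter : ∀ x ≥ X, ∀ y ≥ x, a x ≤ K * (x / y) ^ γ * a y)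
    (hbdd : ∀ k : ℕ, (k : ℝ) * F (r * a k) ≤ C₀) (n : ℕ) {s : ℝ} (hs : 0 < s)
    (hsr : s ≤ r * K) :
    (n : ℝ) * F (s * a n) ≤ (X + 2 + 2 * C₀) * (r * K / s) ^ γ⁻¹ := by
  have hC₀ : 0 ≤ C₀ := by simpa using hbdd 0
  set ρ := (s / (r * K)) ^ γ⁻¹ with hρ
  have hρ0 : 0 < ρ := by positivity
  have hρ1 : ρ ≤ 1 := Real.rpow_le_one (by positivity)
    ((div_le_one (by positivity)).mpr hsr) (by positivity)
  have hρinv : ρ⁻¹ = (r * K / s) ^ γ⁻¹ := by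
    rw [hρ, ← Real.inv_rpow (by positivity), inv_div]
  rw [← hρinv]
  by_cases hsmall : n * ρ < X + 2
  · calc (n : ℝ) * F (s * a n) ≤ n := mul_le_of_le_one_right n.cast_nonneg (hF1 _)
      _ ≤ (X + 2) * ρ⁻¹ := by rw [← div_eq_mul_inv, le_div_iff₀ hρ0]; exact hsmall.le
      _ ≤ (X + 2 + 2 * C₀) * ρ⁻¹ := by gcongr ?_ * _; linarith
  rw [not_lt] at hsmall
  -- `hbdd` is used at this `k`: the Potter-type bound gives `r aₖ ≤ s aₙ`, and `n ≤ 2 k / ρ`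
  set k := ⌊(n : ℝ) * ρ⌋₊
  have hk_le : (k : ℝ) ≤ n * ρ := Nat.floor_le (by positivity)
  have hk_gt : (n : ℝ) * ρ - 1 < k := by linarith [Nat.lt_floor_add_one ((n : ℝ) * ρ)]
  have hkX : X ≤ k := by linarith
  have hk0 : (0 : ℝ) < k := by linarith
  have hkn : (k : ℝ) ≤ n := hk_le.trans (mul_le_of_le_one_right n.cast_nonneg hρ1)
  have hcomp : r * a k ≤ s * a n := by
    have hpow : ((k : ℝ) / n) ^ γ ≤ s / (r * K) := by
      calc ((k : ℝ) / n) ^ γ ≤ ρ ^ γ := by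
            gcongr; rw [div_le_iff₀ (hk0.trans_le hkn), mul_comm]; exact hk_le
        _ = s / (r * K) := Real.rpow_inv_rpow (by positivity) hγ.ne'
    calc r * a k ≤ r * (K * ((k : ℝ) / n) ^ γ * a n) := by gcongr; exact hpotter k hkX n hkn
      _ ≤ r * (K * (s / (r * K)) * a n) := by
          gcongr
          exact ha n (hkX.trans hkn)
      _ = s * a n := by field_simp
  have hFk : F (r * a k) ≤ C₀ / k := by rw [le_div_iff₀ hk0, mul_comm]; exact hbdd k
  calc (n : ℝ) * F (s * a n) ≤ n * (C₀ / k) := by gcongr; exact (hF hcomp).trans hFk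
    _ = C₀ * (n / k) := by ring
    _ ≤ C₀ * (2 * ρ⁻¹) := by
        gcongr
        rw [div_le_iff₀ hk0, mul_right_comm, ← div_eq_mul_inv, le_div_iff₀ hρ0]
        linarith
    _ ≤ (X + 2 + 2 * C₀) * ρ⁻¹ := by nlinarith [inv_pos.mpr hρ0]

theorem ProbabilityTheory.IndepFun.measure_preimage_eq_lintegral {Ω α β : Type*}
    [MeasurableSpace Ω] [MeasurableSpace α] [MeasurableSpace β] {P : Measure Ω}
    [IsFiniteMeasure P] {X : Ω → α} {Z : Ω → β} (hX : Measurable X) (hZ : Measurable Z)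
    (h : IndepFun X Z P) {S : Set (α × β)} (hS : MeasurableSet S) :
    P ((fun ω => (X ω, Z ω)) ⁻¹' S) = ∫⁻ ω, P {ω' | (X ω', Z ω) ∈ S} ∂P := by
  rw [← Measure.map_apply (hX.prodMk hZ) hS,
    h.map_prod_eq_prod_map_map hX.aemeasurable hZ.aemeasurable, Measure.prod_apply_symm hS,
    lintegral_map (measurable_measure_prodMk_right hS) hZ]
  refine lintegral_congr fun ω => ?_
  rw [Measure.map_apply hX (measurable_prodMk_right hS)]
  rfl

theorem tendsto_measure_le_of_tendsto_atTop {Ω ι : Type*} [MeasurableSpace Ω] {P : Measure Ω}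
    [IsFiniteMeasure P] {f : Ω → ℝ} (hf : Measurable f) {l : Filter ι} {r : ι → ℝ}
    (hr : Tendsto r l atTop) : Tendsto (fun i => P {ω | r i ≤ f ω}) l (𝓝 0) := by
  have hempty : ⋂ R : ℝ, {ω | R ≤ f ω} = ∅ :=
    Set.eq_empty_of_forall_notMem fun ω hω => by
      have hle : f ω + 1 ≤ f ω := Set.mem_iInter.mp hω (f ω + 1)
      linarith
  have hlevel := tendsto_measure_iInter_atTop (μ := P) (s := fun R : ℝ => {ω | R ≤ f ω})
    (fun R => (measurableSet_le measurable_const hf).nullMeasurableSet)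
    (fun R R' h ω hω => h.trans hω) ⟨0, measure_ne_top P _⟩
  rw [hempty, measure_empty] at hlevel
  exact hlevel.comp hr

theorem lintegral_ofReal_mul_one_add_div_rpow_neg_ne_top {Ω : Type*} [MeasurableSpace Ω]
    {P : Measure Ω} [IsFiniteMeasure P] {f : Ω → ℝ} (hf : ∀ ω, 0 ≤ f ω) {β C δ : ℝ}
    (hC : 0 ≤ C) (hδ : 0 < δ) (hmom : ∫⁻ ω, ENNReal.ofReal (f ω ^ β) ∂P < ⊤) :
    ∫⁻ ω, ENNReal.ofReal (C * (1 + (δ / f ω) ^ (-β))) ∂P ≠ ⊤ := by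
  have hsplit : ∀ ω, ENNReal.ofReal (C * (1 + (δ / f ω) ^ (-β))) =
      ENNReal.ofReal C + ENNReal.ofReal (C / δ ^ β) * ENNReal.ofReal (f ω ^ β) := fun ω => by
    rw [← ENNReal.ofReal_mul (by positivity),
      ← ENNReal.ofReal_add hC (mul_nonneg (by positivity) (Real.rpow_nonneg (hf ω) _)),
      Real.rpow_neg (div_nonneg hδ.le (hf ω)), Real.div_rpow hδ.le (hf ω), inv_div]
    ring_nf
  simp_rw [hsplit]
  rw [lintegral_add_left measurable_const, lintegral_const,
    lintegral_const_mul' _ _ ENNReal.ofReal_ne_top]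
  finiteness

theorem continuous_opNorm {d : ℕ} : Continuous (opNorm : Mat d → ℝ) :=
  continuous_norm.comp (LinearMap.continuous_of_finiteDimensional
    (Matrix.toLin'.trans LinearMap.toContinuousLinearMap :
      Mat d ≃ₗ[ℝ] Vec d →L[ℝ] Vec d).toLinearMap)

theorem measurable_opNorm {d : ℕ} : Measurable (opNorm : Mat d → ℝ) :=
  have : BorelSpace (Mat d) := inferInstanceAs (BorelSpace (Fin d → Fin d → ℝ))
  continuous_opNorm.measurable

theorem opNorm_nonneg {d : ℕ} (M : Mat d) : 0 ≤ opNorm M := norm_nonneg _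

theorem norm_mulVec_le_opNorm_mul {d : ℕ} (M : Mat d) (q : Vec d) :
    ‖M.mulVec q‖ ≤ opNorm M * ‖q‖ :=
  (LinearMap.toContinuousLinearMap M.mulVecLin).le_opNorm q

theorem le_opNorm_mul_norm_of_add_lt_norm {d : ℕ} {y q : Vec d} {M : Mat d} {u v : ℝ}
    (hy : u + v < ‖y‖) (hsum : ‖y + M.mulVec q‖ ≤ v) : u ≤ opNorm M * ‖q‖ := by
  have htri := norm_le_add_norm_add y (M.mulVec q)
  linarith [norm_mulVec_le_opNorm_mul M q]

section Probability

variable {Ω : Type*} [MeasurableSpace Ω] {P : Measure Ω} {d : ℕ}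

theorem IsRegVar.exists_nat_mul_tail_le {X : Ω → Vec d} {α : ℝ} {a : ℝ → ℝ}
    {μ : Measure (Vec d)} (hX : IsRegVar P X α a μ) :
    ∃ r > 0, ∃ C, ∀ n : ℕ, (n : ℝ) * (P {ω | r * a n ≤ ‖X ω‖}).toReal ≤ C := by
  obtain ⟨-, ha, hfin, htend⟩ := hX
  set W : Set (Vec d) := {y | 1 ≤ ‖y‖}
  have hWclosed : IsClosed W := isClosed_le continuous_const continuous_norm
  have hW0 : (0 : Vec d) ∉ closure W := by simp [W]
  have : IsFiniteMeasure (μ.restrict W) :=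
    ⟨by simpa using hfin W hWclosed.measurableSet hW0⟩
  -- only countably many spheres carry `μ`-mass, so some radius in `(1, 2)` is a continuity radius
  obtain ⟨r, hr, hnull⟩ := exists_null_frontier_thickening (μ.restrict W) {0} one_lt_two
  rw [Metric.thickening_singleton] at hnull
  set A : Set (Vec d) := (Metric.ball 0 r)ᶜ
  have hAclosed : IsClosed A := Metric.isOpen_ball.isClosed_compl
  have hA0 : (0 : Vec d) ∉ closure A := by
    simpa [A, hAclosed.closure_eq] using (zero_lt_one.trans hr.1)
  have hAfr : μ (frontier A) = 0 := by
    have hsub : frontier (Metric.ball (0 : Vec d) r) ⊆ W := fun y hy => by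
      have := Metric.frontier_ball_subset_sphere hy
      simp only [mem_sphere_iff_norm, sub_zero] at this
      simpa [W, this] using hr.1.le
    rwa [frontier_compl, ← Measure.restrict_eq_self μ hsub]
  obtain ⟨C, hC⟩ := (htend A hAclosed.measurableSet hA0 hAfr).bddAbove_range
  refine ⟨r, zero_lt_one.trans hr.1, C, fun n => ?_⟩
  rcases Nat.eq_zero_or_pos n with rfl | hn
  · simpa using hC ⟨0, rfl⟩
  have han : 0 < a n := ha.pos (Nat.cast_pos.mpr hn)
  have hset : {ω | (a n)⁻¹ • X ω ∈ A} = {ω | r * a n ≤ ‖X ω‖} := by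
    ext ω
    simp [A, norm_smul, abs_of_pos han, le_inv_mul_iff₀ han, mul_comm]
  simpa [hset] using hC ⟨n, rfl⟩

theorem IsRegVar.exists_nat_mul_tail_le_rpow [IsProbabilityMeasure P] {X : Ω → Vec d} {α : ℝ}
    {a : ℝ → ℝ} {μ : Measure (Vec d)} (hX : IsRegVar P X α a μ) {α' : ℝ} (hα' : α < α') :
    ∃ C, 0 ≤ C ∧ ∀ n : ℕ, ∀ s > 0,
      (n : ℝ) * (P {ω | s * a n ≤ ‖X ω‖}).toReal ≤ C * (1 + s ^ (-α')) := by
  obtain ⟨r, hr, C₀, hC₀⟩ := hX.exists_nat_mul_tail_le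
  have hα : 0 < α := hX.1
  have ha := hX.2.1
  set η := 1 / α - 1 / α'
  have hη : 0 < η := sub_pos.mpr (one_div_lt_one_div_of_lt hα hα')
  obtain ⟨T, hT, hpotter⟩ := ha.exists_le_mul_rpow hη
  rw [show 1 / α - η = α'⁻¹ by simp [η]] at hpotter
  set F : ℝ → ℝ := fun x => (P {ω | x ≤ ‖X ω‖}).toReal
  have hF : Antitone F := fun x y hxy =>
    ENNReal.toReal_mono (measure_ne_top _ _) (measure_mono fun ω hω => hxy.trans hω)
  have hF1 : ∀ x, F x ≤ 1 := fun x => ENNReal.toReal_le_of_le_ofReal zero_le_one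
    (by simpa using prob_le_one)
  have hC₀0 : 0 ≤ C₀ := by simpa using hC₀ 0
  have hα'0 : 0 < α' := hα.trans hα'
  set K := Real.exp η
  have hB : 0 ≤ (T + 2 + 2 * C₀) * (r * K) ^ α' := by positivity
  refine ⟨C₀ + (T + 2 + 2 * C₀) * (r * K) ^ α', by positivity, fun n s hs => ?_⟩
  have hs' : 0 ≤ s ^ (-α') := by positivity
  by_cases hsr : s ≤ r
  · have key := nat_mul_le_of_le_mul_rpow hF hF1 hr (Real.exp_pos η) hT (inv_pos.mpr hα'0)
      (fun t ht => (ha.pos (hT.trans_le ht)).le) hpotter hC₀ n hs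
      (hsr.trans (le_mul_of_one_le_right hr.le (Real.one_le_exp hη.le)))
    rw [inv_inv, Real.div_rpow (by positivity) hs.le, div_eq_mul_inv, ← Real.rpow_neg hs.le]
      at key
    refine key.trans ?_
    nlinarith
  · rcases Nat.eq_zero_or_pos n with rfl | hn
    · simp only [CharP.cast_eq_zero, zero_mul]
      positivity
    calc (n : ℝ) * F (s * a n) ≤ n * F (r * a n) := by
          gcongr
          exact hF (mul_le_mul_of_nonneg_right (not_le.mp hsr).le (ha.pos (by simpa)).le)
      _ ≤ C₀ := hC₀ n
      _ ≤ _ := by nlinarith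

theorem nat_mul_measure_le_setLIntegral_of_indepFun [IsFiniteMeasure P] {Y Q : Ω → Vec d}
    {M : Ω → Mat d} (hY : Measurable Y) (hQ : Measurable Q) (hM : Measurable M)
    (hindep : IndepFun Q (fun ω => (Y ω, M ω)) P) {N : ℕ} {x c δ : ℝ} (hx : 0 < x)
    (hδ : 0 < δ) {g : ℝ → ℝ} (htail : ∀ s > 0, (N : ℝ) * (P {ω | s * x ≤ ‖Q ω‖}).toReal ≤ g s) :
    N * P {ω | c * x ≤ ‖Y ω‖ ∧ δ * x ≤ opNorm (M ω) * ‖Q ω‖} ≤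
      ∫⁻ ω in {ω | c * x ≤ ‖Y ω‖}, ENNReal.ofReal (g (δ / opNorm (M ω))) ∂P := by
  set S : Set (Vec d × (Vec d × Mat d)) := {p | c * x ≤ ‖p.2.1‖ ∧ δ * x ≤ opNorm p.2.2 * ‖p.1‖}
  have hS : MeasurableSet S :=
    (measurableSet_le measurable_const measurable_snd.fst.norm).inter
      (measurableSet_le measurable_const
        ((measurable_opNorm.comp measurable_snd.snd).mul measurable_fst.norm))
  change (N : ℝ≥0∞) * P ((fun ω => (Q ω, (Y ω, M ω))) ⁻¹' S) ≤ _
  rw [hindep.measure_preimage_eq_lintegral hQ (hY.prodMk hM) hS,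
    ← lintegral_indicator (measurableSet_le measurable_const hY.norm)]
  refine (lintegral_const_mul_le _ _).trans (lintegral_mono fun ω => ?_)
  by_cases hYω : c * x ≤ ‖Y ω‖
  swap
  · simp [S, hYω]
  rw [Set.indicator_of_mem (show ω ∈ {ω | c * x ≤ ‖Y ω‖} from hYω)]
  rcases (opNorm_nonneg (M ω)).eq_or_lt with hm | hm
  · simp [S, ← hm, not_le.mpr (mul_pos hδ hx)]
  have hsection : {ω' | (Q ω', (Y ω, M ω)) ∈ S} = {ω' | δ / opNorm (M ω) * x ≤ ‖Q ω'‖} := by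
    ext ω'
    simp only [S, Set.mem_ofPred_eq, hYω, true_and]
    rw [div_mul_eq_mul_div, div_le_iff₀ hm, mul_comm ‖Q ω'‖]
  rw [hsection, ← ENNReal.ofReal_natCast, ← ENNReal.ofReal_toReal (measure_ne_top P _),
    ← ENNReal.ofReal_mul N.cast_nonneg]
  exact ENNReal.ofReal_le_ofReal (htail _ (div_pos hδ hm))

end Probability

theorem stmt12_general {Ω : Type*} [MeasurableSpace Ω] (P : Measure Ω) [IsProbabilityMeasure P]
    {d : ℕ}
    (Y Q : Ω → Vec d) (Pmat : Ω → Mat d)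
    (hYm : Measurable Y) (hQm : Measurable Q) (hPm : Measurable Pmat)
    (hindep : IndepFun Q (fun ω => (Y ω, Pmat ω)) P)
    (α : ℝ) (a : ℝ → ℝ) (μ : Measure (Vec d))
    (hQ : IsRegVar P Q α a μ)
    (β : ℝ) (hβ : α < β)
    (hmom : ∫⁻ ω, ENNReal.ofReal (opNorm (Pmat ω) ^ β) ∂P < ⊤)
    (t ε : ℝ) (ht : 0 < t) (hε : 0 < ε) :
    Filter.Tendsto (fun n : ℕ => (n : ℝ) *
        (P {ω | (1 + ε) * t * a n < ‖Y ω‖ ∧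
          ‖Y ω + (Pmat ω).mulVec (Q ω)‖ ≤ t * a n}).toReal)
      Filter.atTop (nhds 0) := by
  obtain ⟨C, hC0, hC⟩ := hQ.exists_nat_mul_tail_le_rpow hβ
  have ha : RegVaryFun a (1 / α) := hQ.2.1
  have hδ : 0 < ε * t := mul_pos hε ht
  have hD : Tendsto (fun n : ℕ => P {ω | (1 + ε) * t * a n ≤ ‖Y ω‖}) atTop (𝓝 0) :=
    tendsto_measure_le_of_tendsto_atTop hYm.norm (Tendsto.const_mul_atTop (by positivity)
      ((ha.tendsto_atTop (by simpa using hQ.1)).comp tendsto_natCast_atTop_atTop))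
  have hbound : ∀ n : ℕ, (n : ℝ≥0∞) * P {ω | (1 + ε) * t * a n < ‖Y ω‖ ∧
      ‖Y ω + (Pmat ω).mulVec (Q ω)‖ ≤ t * a n} ≤ ∫⁻ ω in {ω | (1 + ε) * t * a n ≤ ‖Y ω‖},
        ENNReal.ofReal (C * (1 + (ε * t / opNorm (Pmat ω)) ^ (-β))) ∂P := by
    intro n
    rcases Nat.eq_zero_or_pos n with rfl | hn
    · simp
    refine le_trans ?_ (nat_mul_measure_le_setLIntegral_of_indepFun hYm hQm hPm hindep
      (ha.pos (by simpa)) hδ (hC n))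
    gcongr _ * P ?_
    exact fun ω hω => ⟨hω.1.le, le_opNorm_mul_norm_of_add_lt_norm (by linarith [hω.1]) hω.2⟩
  have hlim := tendsto_of_tendsto_of_tendsto_of_le_of_le tendsto_const_nhds
    (tendsto_setLIntegral_zero (lintegral_ofReal_mul_one_add_div_rpow_neg_ne_top
      (fun ω => opNorm_nonneg (Pmat ω)) hC0 hδ hmom) hD) (fun n => zero_le) hbound
  refine ((ENNReal.tendsto_toReal ENNReal.zero_ne_top).comp hlim).congr fun n => ?_
  simp [ENNReal.toReal_mul]

/-- Under the hypotheses of Lemma 2.1, for every `t > 0` and `ε > 0`,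
`n P(‖Y‖ > (1+ε) t aₙ, ‖Y + ΠQ‖ ≤ t aₙ) → 0`. -/
theorem stmt12 {Ω : Type*} [MeasurableSpace Ω] (P : Measure Ω) [IsProbabilityMeasure P]
    {d : ℕ} (hd : 1 ≤ d)
    (Y Q : Ω → Vec d) (Pmat : Ω → Mat d)
    (hYm : Measurable Y) (hQm : Measurable Q) (hPm : Measurable Pmat)
    (hindep : IndepFun Q (fun ω => (Y ω, Pmat ω)) P)
    (α : ℝ) (a : ℝ → ℝ) (ν μ : Measure (Vec d))
    (hY : IsRegVar P Y α a ν) (hQ : IsRegVar P Q α a μ)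
    (β : ℝ) (hβ : α < β)
    (hmom : ∫⁻ ω, ENNReal.ofReal (opNorm (Pmat ω) ^ β) ∂P < ⊤)
    (t ε : ℝ) (ht : 0 < t) (hε : 0 < ε) :
    Filter.Tendsto (fun n : ℕ => (n : ℝ) *
        (P {ω | (1 + ε) * t * a n < ‖Y ω‖ ∧
          ‖Y ω + (Pmat ω).mulVec (Q ω)‖ ≤ t * a n}).toReal)
      Filter.atTop (nhds 0) :=
  stmt12_general P Y Q Pmat hYm hQm hPm hindep α a μ hQ β hβ hmom t ε ht hε
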